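/- (Alternative one-step qRK contraction.) Let β < q < 1 − β with qm and βm integers. Suppose A x* = b_t and b = b_t + ξ with ‖ξ‖₀ ≤ βm. For any x_k ∈ ℝⁿ, let B be a set of exactly qm indices with |r_j| ≤ Q for all j ∈ B, containing every index j with |r_j| < Q. Then (1/(qm)) Σ_{i∈B} ‖(x_k + r_i a_i) − x*‖² ≤ (1 − C)·‖x_k − x*‖², where C := (q − β)·σ_{q−β,min}(A)²/(q² m) − (β/q)·(1 + 2σ_max(A)²/(m(1 − q − β))). Moreover, if (q/(q−β))·(βm/σ_max(A)² + 2β/(1 − q − β)) < σ_{q−β,min}(A)²/σ_max(A)², then C > 0. -/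

import Mathlib

open Finset

/-- Largest singular value of `A`, as the operator norm of the associated
Euclidean linear map. -/
noncomputable def sigmaMax {m n : ℕ} (A : Matrix (Fin m) (Fin n) ℝ) : ℝ :=
  ‖LinearMap.toContinuousLinearMap (Matrix.toEuclideanLin A)‖

/-- `sigmaSMin A k` is the minimum over all index sets `I` of cardinality `k`
of the smallest value of `‖A_I x‖` over unit vectors `x`. -/
noncomputable def sigmaSMin {m n : ℕ} (A : Matrix (Fin m) (Fin n) ℝ) (k : ℕ) : ℝ :=
  sInf {t : ℝ | ∃ I : Finset (Fin m), I.card = k ∧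
    t = sInf {u : ℝ | ∃ x : EuclideanSpace ℝ (Fin n), ‖x‖ = 1 ∧
      u = Real.sqrt (∑ i ∈ I, (A.mulVec (fun k => x k) i) ^ 2)}}

/-- The `j`-th row of `A`, as a vector in Euclidean space. -/
noncomputable def row {m n : ℕ} (A : Matrix (Fin m) (Fin n) ℝ) (j : Fin m) :
    EuclideanSpace ℝ (Fin n) := WithLp.toLp 2 (fun k => A j k)

/-- Residual `r_j = b_j - ⟨x, a_j⟩`. -/
noncomputable def resid {m n : ℕ} (A : Matrix (Fin m) (Fin n) ℝ) (b : Fin m → ℝ)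
    (x : EuclideanSpace ℝ (Fin n)) (j : Fin m) : ℝ :=
  b j - ∑ k, x k * A j k

/-- `IsQuantile f k Q` says `Q` is the `k`-th smallest value (1-indexed,
counted with multiplicity) of the multiset `{f j}`. -/
def IsQuantile {m : ℕ} (f : Fin m → ℝ) (k : ℕ) (Q : ℝ) : Prop :=
  k ≤ (Finset.univ.filter fun j => f j ≤ Q).card ∧
  (Finset.univ.filter fun j => f j < Q).card < k

/-! With `e = x_k - x*` and `g_j = ⟪e, a_j⟫` the residual is `r_j = ξ_j - g_j`, and a step along
the unit row `a_i` gives `‖e + r_i a_i‖² = ‖e‖² + ξ_i² - g_i²`. On the `(q - β) m` uncorrupted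
indices of `B` this is a gain of `g_i²`, which sums to at least `σ_{q-β,min}² ‖e‖²`; on the at most
`β m` corrupted ones `|r_i| ≤ Q` bounds the loss by `2 Q² + ‖e‖²`. Finally at least
`m (1 - q - β)` uncorrupted indices have `|g_j| = |r_j| ≥ Q`, so
`m (1 - q - β) Q² ≤ ‖A e‖² ≤ σ_max² ‖e‖²`. -/

open RealInnerProductSpace
open scoped Matrix

lemma norm_add_smul_sub_inner_sq {E : Type*} [NormedAddCommGroup E] [InnerProductSpace ℝ E]
    (e a : E) (ha : ‖a‖ = 1) (c : ℝ) :
    ‖e + (c - ⟪e, a⟫) • a‖ ^ 2 = ‖e‖ ^ 2 + (c ^ 2 - ⟪e, a⟫ ^ 2) := by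
  rw [norm_add_sq_real, real_inner_smul_right, norm_smul, Real.norm_eq_abs, ha, mul_one, sq_abs]
  ring

lemma inner_sq_le_norm_sq {E : Type*} [NormedAddCommGroup E] [InnerProductSpace ℝ E]
    (e a : E) (ha : ‖a‖ = 1) : ⟪e, a⟫ ^ 2 ≤ ‖e‖ ^ 2 := by
  simpa [sq, real_inner_self_eq_norm_mul_norm, ha] using real_inner_mul_inner_self_le e a

lemma exists_subset_card_eq_forall_eq_zero {ι M : Type*} [Fintype ι] [Zero M] [DecidableEq M]
    (ξ : ι → M) (B : Finset ι) {l : ℕ} (hξ : (univ.filter fun j => ξ j ≠ 0).card ≤ l) :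
    ∃ T ⊆ B, T.card = B.card - l ∧ ∀ i ∈ T, ξ i = 0 := by
  have hbad : (B.filter fun j => ξ j ≠ 0).card ≤ l :=
    (card_le_card (filter_subset_filter _ (subset_univ B))).trans hξ
  have hsplit := card_filter_add_card_filter_not (s := B) (fun j => ξ j = 0)
  obtain ⟨T, hTB, hT⟩ := exists_subset_card_eq (s := B.filter fun j => ξ j = 0) (n := B.card - l)
    (by simp only [ne_eq] at hbad; omega)
  exact ⟨T, hTB.trans (filter_subset _ _), hT, fun i hi => (mem_filter.1 (hTB hi)).2⟩

lemma sum_sq_sub_sq_le {ι : Type*} [DecidableEq ι] {B T : Finset ι} (hTB : T ⊆ B)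
    {ξ g : ι → ℝ} {Q E : ℝ} (hξ : ∀ i ∈ T, ξ i = 0) (hQ : ∀ i ∈ B, |ξ i - g i| ≤ Q)
    (hE : ∀ i ∈ B, g i ^ 2 ≤ E) :
    ∑ i ∈ B, (ξ i ^ 2 - g i ^ 2) ≤ (B \ T).card * (2 * Q ^ 2 + E) - ∑ i ∈ T, g i ^ 2 := by
  have hcorrupt : ∀ i ∈ B \ T, ξ i ^ 2 - g i ^ 2 ≤ 2 * Q ^ 2 + E := by
    intro i hi
    have hiB := (mem_sdiff.1 hi).1
    have hr : (ξ i - g i) ^ 2 ≤ Q ^ 2 := by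
      simpa only [sq_abs] using pow_le_pow_left₀ (abs_nonneg _) (hQ i hiB) 2
    -- `ξ² ≤ 2 (ξ - g)² + 2 g²`
    nlinarith [hE i hiB, sq_nonneg (ξ i - 2 * g i)]
  have hclean : ∑ i ∈ T, (ξ i ^ 2 - g i ^ 2) = -∑ i ∈ T, g i ^ 2 := by
    rw [← sum_neg_distrib]
    exact sum_congr rfl fun i hi => by rw [hξ i hi]; ring
  have := sum_le_card_nsmul _ _ _ hcorrupt
  rw [nsmul_eq_mul] at this
  rw [← sum_sdiff hTB, hclean]
  linarith

lemma card_sub_mul_sq_le_sum_sq {ι : Type*} [Fintype ι] [DecidableEq ι] {ξ g : ι → ℝ} {Q : ℝ}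
    (hQ : 0 ≤ Q) {k l : ℕ} (hξ : (univ.filter fun j => ξ j ≠ 0).card ≤ l)
    (hk : (univ.filter fun j => |ξ j - g j| < Q).card < k) :
    ((Fintype.card ι : ℝ) - l - k) * Q ^ 2 ≤ ∑ j, g j ^ 2 := by
  set U := (univ.filter fun j => ξ j = 0) \ univ.filter fun j => |ξ j - g j| < Q
  have hsplit := card_filter_add_card_filter_not (s := univ) (fun j => ξ j = 0)
  have hU : (Fintype.card ι : ℝ) - l - k ≤ U.card := by
    have : (univ.filter fun j => ξ j = 0).card ≤ U.card + _ := card_le_card_sdiff_add_card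
    simp only [card_univ, ne_eq] at hsplit hξ
    have : Fintype.card ι ≤ U.card + l + k := by omega
    have : (Fintype.card ι : ℝ) ≤ U.card + l + k := by exact_mod_cast this
    linarith
  have hlarge : ∀ j ∈ U, Q ^ 2 ≤ g j ^ 2 := by
    intro j hj
    simp only [U, mem_sdiff, mem_filter, mem_univ, true_and, not_lt] at hj
    rw [hj.1, zero_sub, abs_neg] at hj
    simpa only [sq_abs] using pow_le_pow_left₀ hQ hj.2 2
  calc ((Fintype.card ι : ℝ) - l - k) * Q ^ 2 ≤ U.card * Q ^ 2 := by gcongr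
    _ ≤ ∑ j ∈ U, g j ^ 2 := by
      rw [← nsmul_eq_mul]; exact card_nsmul_le_sum _ _ _ hlarge
    _ ≤ ∑ j, g j ^ 2 := sum_le_sum_of_subset_of_nonneg (subset_univ U) fun _ _ _ => sq_nonneg _

section
variable {m n : ℕ} (A : Matrix (Fin m) (Fin n) ℝ)

lemma inner_row_eq_mulVec (x : EuclideanSpace ℝ (Fin n)) (j : Fin m) :
    ⟪x, row A j⟫ = (A *ᵥ x.ofLp) j := by
  simp [PiLp.inner_apply, row, Matrix.mulVec, dotProduct]

lemma norm_row_eq_one (hrow : ∀ j, ∑ k, A j k ^ 2 = 1) (j : Fin m) : ‖row A j‖ = 1 := by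
  rw [EuclideanSpace.norm_eq]; simp [row, hrow]

lemma resid_eq_sub_inner_row (x xstar : EuclideanSpace ℝ (Fin n)) (ξ : Fin m → ℝ) (j : Fin m) :
    resid A (A *ᵥ xstar.ofLp + ξ) x j = ξ j - ⟪x - xstar, row A j⟫ := by
  rw [inner_sub_left, inner_row_eq_mulVec, inner_row_eq_mulVec, resid]
  simp only [Matrix.mulVec, dotProduct, Pi.add_apply, mul_comm]
  ring

lemma sum_inner_row_sq_le_sigmaMax (x : EuclideanSpace ℝ (Fin n)) :
    ∑ j, ⟪x, row A j⟫ ^ 2 ≤ sigmaMax A ^ 2 * ‖x‖ ^ 2 := by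
  have h := pow_le_pow_left₀ (norm_nonneg _)
    ((LinearMap.toContinuousLinearMap (Matrix.toEuclideanLin A)).le_opNorm x) 2
  simp only [inner_row_eq_mulVec]
  simpa [EuclideanSpace.norm_sq_eq, sigmaMax, mul_pow] using h

lemma sigmaSMin_nonneg (k : ℕ) : 0 ≤ sigmaSMin A k :=
  Real.sInf_nonneg <| by
    rintro _ ⟨I, -, rfl⟩
    exact Real.sInf_nonneg <| by rintro _ ⟨x, -, rfl⟩; exact Real.sqrt_nonneg _

lemma sigmaSMin_le (I : Finset (Fin m)) {u : EuclideanSpace ℝ (Fin n)} (hu : ‖u‖ = 1) :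
    sigmaSMin A I.card ≤ √(∑ i ∈ I, ⟪u, row A i⟫ ^ 2) := by
  have hsqrt : ∀ J : Finset (Fin m), ∀ v ∈ {v | ∃ x : EuclideanSpace ℝ (Fin n), ‖x‖ = 1 ∧
      v = √(∑ i ∈ J, (A *ᵥ x.ofLp) i ^ 2)}, 0 ≤ v := by
    rintro J _ ⟨x, -, rfl⟩; exact Real.sqrt_nonneg _
  simp only [inner_row_eq_mulVec, sigmaSMin]
  refine le_trans (csInf_le ⟨0, ?_⟩ ⟨I, rfl, rfl⟩) (csInf_le ⟨0, hsqrt I⟩ ⟨u, hu, rfl⟩)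
  rintro _ ⟨J, -, rfl⟩
  exact Real.sInf_nonneg (hsqrt J)

lemma sigmaSMin_sq_mul_norm_sq_le (I : Finset (Fin m)) (x : EuclideanSpace ℝ (Fin n)) :
    sigmaSMin A I.card ^ 2 * ‖x‖ ^ 2 ≤ ∑ i ∈ I, ⟪x, row A i⟫ ^ 2 := by
  rcases eq_or_ne x 0 with rfl | hx
  · simp
  have hu : ‖‖x‖⁻¹ • x‖ = 1 := norm_smul_inv_norm hx
  have h := (Real.le_sqrt (sigmaSMin_nonneg A _) (by positivity)).1 (sigmaSMin_le A I hu)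
  simp only [real_inner_smul_left, mul_pow, ← mul_sum] at h
  have hx' : 0 < ‖x‖ ^ 2 := by positivity
  calc sigmaSMin A I.card ^ 2 * ‖x‖ ^ 2 ≤ ‖x‖⁻¹ ^ 2 * (∑ i ∈ I, ⟪x, row A i⟫ ^ 2) * ‖x‖ ^ 2 := by
        gcongr
    _ = ∑ i ∈ I, ⟪x, row A i⟫ ^ 2 := by field_simp

end

lemma qrk_contraction_arith {q β m E σ M Q S : ℝ} (hβ : 0 ≤ β) (hβq : β < q) (hq1 : q < 1 - β)
    (hm : 0 < m) (hE : 0 ≤ E) (hQ : (m - β * m - q * m) * Q ^ 2 ≤ M ^ 2 * E)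
    (hS : S ≤ q * m * E + β * m * (2 * Q ^ 2 + E) - σ ^ 2 * E) :
    1 / (q * m) * S ≤
      (1 - ((q - β) * σ ^ 2 / (q ^ 2 * m) - β / q * (1 + 2 * M ^ 2 / (m * (1 - q - β))))) * E := by
  have hq : 0 < q := hβ.trans_lt hβq
  have hD : 0 < 1 - q - β := by linarith
  have hQ' : m * Q ^ 2 ≤ M ^ 2 * E / (1 - q - β) := by
    rw [le_div_iff₀ hD]; linarith
  have hσ : (q - β) / q * (σ ^ 2 * E) ≤ σ ^ 2 * E := by
    apply mul_le_of_le_one_left (by positivity)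
    rw [div_le_one hq]; linarith
  rw [one_div, inv_mul_le_iff₀ (by positivity)]
  have hrhs : q * m * ((1 - ((q - β) * σ ^ 2 / (q ^ 2 * m) -
        β / q * (1 + 2 * M ^ 2 / (m * (1 - q - β))))) * E)
      = q * m * E - (q - β) / q * (σ ^ 2 * E) + β * m * E + 2 * β * (M ^ 2 * E / (1 - q - β)) := by
    field_simp
    ring
  rw [hrhs]
  nlinarith

lemma qrk_constant_pos {q β m σ M : ℝ} (hβ : 0 ≤ β) (hβq : β < q) (hq1 : q < 1 - β) (hm : 0 < m)
    (h : q / (q - β) * (β * m / M ^ 2 + 2 * β / (1 - q - β)) < σ ^ 2 / M ^ 2) :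
    0 < (q - β) * σ ^ 2 / (q ^ 2 * m) - β / q * (1 + 2 * M ^ 2 / (m * (1 - q - β))) := by
  have hq : 0 < q := hβ.trans_lt hβq
  have hD : 0 < 1 - q - β := by linarith
  rcases eq_or_ne M 0 with rfl | hM
  · -- `x / 0 = 0` turns the hypothesis into `0 ≤ _ < 0`
    simp only [ne_eq, OfNat.ofNat_ne_zero, not_false_eq_true, zero_pow, div_zero, zero_add] at h
    have : 0 ≤ q / (q - β) * (2 * β / (1 - q - β)) := by
      apply mul_nonneg <;> apply div_nonneg <;> linarith
    linarith
  have hM2 : 0 < M ^ 2 := by positivity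
  have hqβ : 0 < q - β := by linarith
  have key : q * (β * m + 2 * β * M ^ 2 / (1 - q - β)) < (q - β) * σ ^ 2 := by
    have hlhs : q / (q - β) * (β * m / M ^ 2 + 2 * β / (1 - q - β))
        = q * (β * m + 2 * β * M ^ 2 / (1 - q - β)) / (q - β) / M ^ 2 := by
      field_simp
    rw [hlhs, div_lt_div_iff_of_pos_right hM2, div_lt_iff₀ hqβ] at h
    linarith
  have hgoal : β / q * (1 + 2 * M ^ 2 / (m * (1 - q - β)))
      = q * (β * m + 2 * β * M ^ 2 / (1 - q - β)) / (q ^ 2 * m) := by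
    field_simp
  rw [sub_pos, hgoal]
  gcongr

theorem qrk_one_step_contraction_general
    {m n : ℕ} (A : Matrix (Fin m) (Fin n) ℝ)
    (q β : ℝ) (kq kβ : ℕ)
    (hm : 0 < m)
    (hrow : ∀ j, ∑ k, (A j k) ^ 2 = 1)
    (hβq : β < q) (hq1 : q < 1 - β)
    (hkq : (kq : ℝ) = q * m) (hkβ : (kβ : ℝ) = β * m)
    (xstar : EuclideanSpace ℝ (Fin n)) (bt b ξ : Fin m → ℝ)
    (hsol : A.mulVec (fun k => xstar k) = bt)
    (hb : b = bt + ξ)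
    (hsparse : (Finset.univ.filter fun j => ξ j ≠ 0).card ≤ kβ)
    (xk : EuclideanSpace ℝ (Fin n)) (Q : ℝ)
    (hQ : IsQuantile (fun j => |resid A b xk j|) kq Q)
    (B : Finset (Fin m)) (hBcard : B.card = kq)
    (hBQ : ∀ j ∈ B, |resid A b xk j| ≤ Q)
    (C : ℝ)
    (hC : C = (q - β) * sigmaSMin A (kq - kβ) ^ 2 / (q ^ 2 * m) -
      (β / q) * (1 + 2 * sigmaMax A ^ 2 / (m * (1 - q - β)))) :
    (1 / (q * m)) * ∑ i ∈ B, ‖(xk + resid A b xk i • row A i) - xstar‖ ^ 2 ≤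
        (1 - C) * ‖xk - xstar‖ ^ 2 ∧
    ((q / (q - β)) * (β * m / sigmaMax A ^ 2 + 2 * β / (1 - q - β)) <
        sigmaSMin A (kq - kβ) ^ 2 / sigmaMax A ^ 2 → 0 < C) := by
  classical
  subst hC
  have hm' : (0 : ℝ) < m := Nat.cast_pos.2 hm
  have hβ : 0 ≤ β := nonneg_of_mul_nonneg_left (hkβ ▸ kβ.cast_nonneg) hm'
  have hkβq : kβ < kq := by exact_mod_cast (show (kβ : ℝ) < kq by rw [hkβ, hkq]; gcongr)
  set e := xk - xstar
  set g : Fin m → ℝ := fun j => ⟪e, row A j⟫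
  have hres : ∀ j, resid A b xk j = ξ j - g j := fun j => by
    rw [hb, ← hsol]; exact resid_eq_sub_inner_row A xk xstar ξ j
  have hstep : ∀ j, ‖(xk + resid A b xk j • row A j) - xstar‖ ^ 2
      = ‖e‖ ^ 2 + (ξ j ^ 2 - g j ^ 2) := fun j => by
    rw [add_sub_right_comm, hres]
    exact norm_add_smul_sub_inner_sq e (row A j) (norm_row_eq_one A hrow j) (ξ j)
  have hQ0 : 0 ≤ Q := by
    obtain ⟨j, hj⟩ := card_pos.1 (hBcard ▸ Nat.zero_lt_of_lt hkβq)
    exact (abs_nonneg _).trans (hBQ j hj)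
  obtain ⟨T, hTB, hTcard, hξT⟩ := exists_subset_card_eq_forall_eq_zero ξ B hsparse
  have hclean : sigmaSMin A (kq - kβ) ^ 2 * ‖e‖ ^ 2 ≤ ∑ i ∈ T, g i ^ 2 := by
    rw [← hBcard, ← hTcard]; exact sigmaSMin_sq_mul_norm_sq_le A T e
  have hsum := sum_sq_sub_sq_le hTB hξT (fun i hi => hres i ▸ hBQ i hi)
    fun i _ => inner_sq_le_norm_sq e (row A i) (norm_row_eq_one A hrow i)
  have hlarge := card_sub_mul_sq_le_sum_sq (g := g) hQ0 hsparse (k := kq)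
    (by simpa only [hres] using hQ.2)
  rw [card_sdiff_of_subset hTB, hTcard, hBcard, Nat.sub_sub_self hkβq.le] at hsum
  refine ⟨qrk_contraction_arith (Q := Q) hβ hβq hq1 hm' (sq_nonneg ‖e‖) ?_ ?_,
    qrk_constant_pos hβ hβq hq1 hm'⟩
  · rw [← hkβ, ← hkq]
    simpa using hlarge.trans (sum_inner_row_sq_le_sigmaMax A e)
  · rw [sum_congr rfl fun j _ => hstep j, sum_add_distrib, sum_const, hBcard, nsmul_eq_mul, hkq,
      ← hkβ]
    linarith

theorem qrk_one_step_contraction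
    {m n : ℕ} (A : Matrix (Fin m) (Fin n) ℝ)
    (q β : ℝ) (kq kβ : ℕ)
    (hm : 0 < m) (hmn : n ≤ m) (hrank : A.rank = n)
    (hrow : ∀ j, ∑ k, (A j k) ^ 2 = 1)
    (hβq : β < q) (hq1 : q < 1 - β)
    (hkq : (kq : ℝ) = q * m) (hkβ : (kβ : ℝ) = β * m)
    (xstar : EuclideanSpace ℝ (Fin n)) (bt b ξ : Fin m → ℝ)
    (hsol : A.mulVec (fun k => xstar k) = bt)
    (hb : b = bt + ξ)
    (hsparse : (Finset.univ.filter fun j => ξ j ≠ 0).card ≤ kβ)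
    (xk : EuclideanSpace ℝ (Fin n)) (Q : ℝ)
    (hQ : IsQuantile (fun j => |resid A b xk j|) kq Q)
    (B : Finset (Fin m)) (hBcard : B.card = kq)
    (hBQ : ∀ j ∈ B, |resid A b xk j| ≤ Q)
    (hBfull : ∀ j, |resid A b xk j| < Q → j ∈ B)
    (C : ℝ)
    (hC : C = (q - β) * sigmaSMin A (kq - kβ) ^ 2 / (q ^ 2 * m) -
      (β / q) * (1 + 2 * sigmaMax A ^ 2 / (m * (1 - q - β)))) :
    (1 / (q * m)) * ∑ i ∈ B, ‖(xk + resid A b xk i • row A i) - xstar‖ ^ 2 ≤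
        (1 - C) * ‖xk - xstar‖ ^ 2 ∧
    ((q / (q - β)) * (β * m / sigmaMax A ^ 2 + 2 * β / (1 - q - β)) <
        sigmaSMin A (kq - kβ) ^ 2 / sigmaMax A ^ 2 → 0 < C) :=
  qrk_one_step_contraction_general A q β kq kβ hm hrow hβq hq1 hkq hkβ xstar bt b ξ hsol hb hsparse
    xk Q hQ B hBcard hBQ C hC
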